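/- arXiv:1408.0157 — 9 statements merged into one kernel-verified Lean document; each statement's English description precedes it below -/
import Mathlib

section
/- Let μ : (0,∞) → ℝ be Lebesgue integrable. Then for every ω ∈ ℝ, the function y ↦ ((e^{−iωy} − 1)/y)·μ(y) is integrable on (0,∞) and ∫₀^∞ ((e^{−iωy} − 1)/y) μ(y) dy = −i ∫₀^ω μ̂(ζ) dζ, where the outer integral on the right is the oriented integral (equal to −∫_ω^0 when ω < 0). -/
/-!
Since `(e^{-iωy} - 1) / y = -i ∫₀^ω e^{-iζy} dζ` for `y ≠ 0`, the kernel is bounded by `|ω|`,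
which gives integrability, and the identity is Fubini's theorem on `[0, ω] × (0, ∞)`, where the
integrand `μ(y) e^{-iζy}` is dominated by `|μ(y)|`.
-/

open MeasureTheory Complex

lemma integral_exp_neg_I_mul_mul (ω y : ℝ) (hy : y ≠ 0) :
    ∫ ζ in (0:ℝ)..ω, exp (-I * ζ * y) = (exp (-I * ω * y) - 1) / (-I * y) := by
  have hc : -I * (y : ℂ) ≠ 0 := by simp [hy]
  have h := integral_exp_mul_complex (a := 0) (b := ω) hc
  simp only [mul_right_comm (-I) (y : ℂ)] at h
  simpa using h

lemma exp_neg_I_mul_sub_one_div_eq (ω y : ℝ) (hy : y ≠ 0) :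
    (exp (-I * ω * y) - 1) / y = -I * ∫ ζ in (0:ℝ)..ω, exp (-I * ζ * y) := by
  have hy' : (y : ℂ) ≠ 0 := by exact_mod_cast hy
  rw [integral_exp_neg_I_mul_mul ω y hy]
  field_simp

lemma norm_exp_neg_I_mul_sub_one_div_le (ω y : ℝ) :
    ‖(exp (-I * ω * y) - 1) / y‖ ≤ |ω| := by
  rcases eq_or_ne y 0 with rfl | hy
  · simp -- the left side is the junk value `x / 0 = 0`
  rw [exp_neg_I_mul_sub_one_div_eq ω y hy, norm_mul, norm_neg, norm_I, one_mul]
  simpa using intervalIntegral.norm_integral_le_of_norm_le_const (a := 0) (b := ω) (C := 1)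
    (f := fun ζ : ℝ => exp (-I * ζ * y)) fun ζ _ => by simp [norm_exp]

variable {ν : Measure ℝ} {f : ℝ → ℂ}

lemma MeasureTheory.Integrable.exp_neg_I_mul_sub_one_div_mul (hf : Integrable f ν) (ω : ℝ) :
    Integrable (fun y : ℝ => (exp (-I * ω * y) - 1) / y * f y) ν := by
  refine (hf.norm.const_mul |ω|).mono' ?_ (Filter.Eventually.of_forall fun y => ?_)
  · exact (Measurable.aestronglyMeasurable (by fun_prop)).mul hf.1
  · rw [norm_mul]
    exact mul_le_mul_of_nonneg_right (norm_exp_neg_I_mul_sub_one_div_le ω y) (norm_nonneg _)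

lemma intervalIntegral_integral_mul_exp_swap [SFinite ν] (hf : Integrable f ν) (a b : ℝ) :
    ∫ ζ in a..b, ∫ y, f y * exp (-I * ζ * y) ∂ν
      = ∫ y, f y * (∫ ζ in a..b, exp (-I * ζ * y)) ∂ν := by
  have hint : Integrable (Function.uncurry fun (ζ y : ℝ) => f y * exp (-I * ζ * y))
      ((volume.restrict (Set.uIoc a b)).prod ν) := by
    have : IsFiniteMeasure (volume.restrict (Set.uIoc a b)) :=
      isFiniteMeasure_restrict.2 measure_Ioc_lt_top.ne
    refine (Integrable.mul_prod (integrable_const (1 : ℝ)) hf.norm).mono'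
      (hf.1.comp_snd.mul (Continuous.aestronglyMeasurable (by fun_prop)))
      (Filter.Eventually.of_forall fun ⟨ζ, y⟩ => ?_)
    simp [norm_exp]
  rw [intervalIntegral_integral_swap hint]
  simp only [intervalIntegral.integral_const_mul]

theorem stmt0 (μ : ℝ → ℝ) (hμ : IntegrableOn μ (Set.Ioi 0)) (ω : ℝ) :
    IntegrableOn (fun y : ℝ =>
      ((Complex.exp (-Complex.I * ω * y) - 1) / y) * (μ y : ℂ)) (Set.Ioi 0) ∧
    ∫ y in Set.Ioi (0:ℝ), ((Complex.exp (-Complex.I * ω * y) - 1) / y) * (μ y : ℂ)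
      = -Complex.I *
        ∫ ζ in (0:ℝ)..ω, ∫ y in Set.Ioi (0:ℝ), (μ y : ℂ) * Complex.exp (-Complex.I * ζ * y) := by
  have hμc : Integrable (fun y => (μ y : ℂ)) (volume.restrict (Set.Ioi 0)) := hμ.ofReal
  refine ⟨hμc.exp_neg_I_mul_sub_one_div_mul ω, ?_⟩
  rw [intervalIntegral_integral_mul_exp_swap hμc, ← integral_const_mul]
  refine integral_congr_ae ?_
  filter_upwards [ae_restrict_mem measurableSet_Ioi] with y hy
  rw [exp_neg_I_mul_sub_one_div_eq ω y (ne_of_gt hy)]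
  ring
end

section
/- Let μ : (0,∞) → ℝ be Lebesgue integrable. Then for every ω ∈ ℝ, the function y ↦ ((e^{−iωy} + e^{iωy} − 2)/y)·μ(y) is integrable on (0,∞) and [𝒢₁μ](ω) := ∫₀^∞ ((e^{−iωy} + e^{iωy} − 2)/y) μ(y) dy = 2·Im ∫₀^ω μ̂(ζ) dζ, where the outer integral on the right is the oriented integral. -/
/-!
By Fubini (the kernel `μ y * exp (-I ζ y)` is bounded by `|μ y|` on a finite strip), the
oriented integral of `μ̂` over `[0, ω]` is `∫ μ y * (∫₀^ω exp (-I ζ y) dζ) dy`, and for `y ≠ 0`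
twice the imaginary part of the inner integral `(exp (-I ω y) - 1) / (-I y)` is
`(2 cos (ω y) - 2) / y = (exp (-I ω y) + exp (I ω y) - 2) / y`. Since `μ` is real, the imaginary
part commutes with multiplication by `μ y` and with the outer integral.
-/

open MeasureTheory Complex

section FubiniFourier

variable {ν : Measure ℝ} {f : ℝ → ℂ}

lemma integrable_prod_mul_exp_neg_I_mul (hf : Integrable f ν) (a b : ℝ) :
    Integrable (fun p : ℝ × ℝ => f p.2 * exp (-I * p.1 * p.2))
      ((volume.restrict (Set.uIoc a b)).prod ν) := by
  have : IsFiniteMeasure (volume.restrict (Set.uIoc a b)) := ⟨by simp [Set.uIoc]⟩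
  have hmeas : AEStronglyMeasurable (fun p : ℝ × ℝ => f p.2 * exp (-I * p.1 * p.2))
      ((volume.restrict (Set.uIoc a b)).prod ν) :=
    hf.aestronglyMeasurable.comp_snd.mul (by fun_prop : Continuous _).aestronglyMeasurable
  refine ((integrable_const (1 : ℝ)).mul_prod hf.norm).mono' hmeas (ae_of_all _ fun p => ?_)
  rw [norm_mul, norm_exp]
  simp

lemma integrable_intervalIntegral_mul_exp_neg_I_mul [SFinite ν] (hf : Integrable f ν) (a b : ℝ) :
    Integrable (fun y => ∫ ζ in a..b, f y * exp (-I * ζ * y)) ν := by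
  simp_rw [intervalIntegral.intervalIntegral_eq_integral_uIoc]
  exact (integrable_prod_mul_exp_neg_I_mul hf a b).integral_prod_right.smul _

lemma intervalIntegral_integral_mul_exp_neg_I_mul_swap [SFinite ν] (hf : Integrable f ν) (a b : ℝ) :
    ∫ ζ in a..b, ∫ y, f y * exp (-I * ζ * y) ∂ν
      = ∫ y, (∫ ζ in a..b, f y * exp (-I * ζ * y)) ∂ν :=
  intervalIntegral_integral_swap (f := fun ζ y => f y * exp (-I * ζ * y))
    (integrable_prod_mul_exp_neg_I_mul hf a b)

end FubiniFourier

lemma integral_exp_neg_I_mul {y : ℝ} (hy : y ≠ 0) (ω : ℝ) :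
    ∫ ζ in (0 : ℝ)..ω, exp (-I * ζ * y) = (exp (-I * ω * y) - 1) / (-I * y) := by
  simp_rw [mul_right_comm (-I)]
  rw [integral_exp_mul_complex (by simp [hy]), ofReal_zero, mul_zero, exp_zero]

lemma exp_neg_I_mul_add_exp_I_mul_sub_two_div {y : ℝ} (hy : y ≠ 0) (ω : ℝ) :
    (exp (-I * ω * y) + exp (I * ω * y) - 2) / y
      = ((2 * (∫ ζ in (0 : ℝ)..ω, exp (-I * ζ * y)).im : ℝ) : ℂ) := by
  have hre : (exp (-I * ω * y)).re = Real.cos (ω * y) := by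
    rw [show -I * ω * y = ((-(ω * y) : ℝ) : ℂ) * I by push_cast; ring, exp_ofReal_mul_I_re,
      Real.cos_neg]
  have hsum : exp (-I * ω * y) + exp (I * ω * y) = 2 * Real.cos (ω * y) := by
    rw [ofReal_cos, two_cos]; push_cast; ring_nf
  have hquot : (exp (-I * ω * y) - 1) / (-I * y) = I * (exp (-I * ω * y) - 1) / y := by
    field_simp; ring_nf; simp
  rw [integral_exp_neg_I_mul hy, hquot, hsum]
  simp only [div_ofReal_im, mul_im, I_re, I_im, sub_re, one_re, hre]
  push_cast
  ring

theorem stmt1 (μ : ℝ → ℝ) (hμ : IntegrableOn μ (Set.Ioi 0)) (ω : ℝ) :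
    IntegrableOn (fun y : ℝ =>
      ((Complex.exp (-Complex.I * ω * y) + Complex.exp (Complex.I * ω * y) - 2) / y) * (μ y : ℂ))
      (Set.Ioi 0) ∧
    ∫ y in Set.Ioi (0:ℝ),
        ((Complex.exp (-Complex.I * ω * y) + Complex.exp (Complex.I * ω * y) - 2) / y) * (μ y : ℂ)
      = ((2 * (∫ ζ in (0:ℝ)..ω,
            ∫ y in Set.Ioi (0:ℝ), (μ y : ℂ) * Complex.exp (-Complex.I * ζ * y)).im : ℝ) : ℂ) := by
  set G : ℝ → ℂ := fun y => ∫ ζ in (0 : ℝ)..ω, (μ y : ℂ) * exp (-I * ζ * y)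
  have hG : IntegrableOn G (Set.Ioi 0) :=
    integrable_intervalIntegral_mul_exp_neg_I_mul hμ.ofReal 0 ω
  have hpt : Set.EqOn
      (fun y : ℝ => ((exp (-I * ω * y) + exp (I * ω * y) - 2) / y) * (μ y : ℂ))
      (fun y => ((2 * (G y).im : ℝ) : ℂ)) (Set.Ioi 0) := fun y hy => by
    simp only [G, intervalIntegral.integral_const_mul, im_ofReal_mul,
      exp_neg_I_mul_add_exp_I_mul_sub_two_div hy.ne']
    push_cast
    ring
  refine ⟨IntegrableOn.congr_fun ((hG.im.const_mul 2).ofReal (𝕜 := ℂ)) hpt.symm measurableSet_Ioi,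
    ?_⟩
  have hswap := intervalIntegral_integral_mul_exp_neg_I_mul_swap hμ.ofReal 0 ω
  rw [setIntegral_congr_fun measurableSet_Ioi hpt, integral_complex_ofReal, integral_const_mul]
  exact congrArg (fun r => ((2 * r : ℝ) : ℂ)) ((integral_im hG).trans (congrArg im hswap.symm))
end

section
/- Let μ : (0,∞) → ℝ be Lebesgue integrable. Then for every ω ∈ ℝ, the function y ↦ ((e^{−iωy} − 1 + iωy)/y²)·μ(y) is integrable on (0,∞) and ∫₀^∞ ((e^{−iωy} − 1 + iωy)/y²) μ(y) dy = −∫₀^ω ∫₀^η μ̂(ζ) dζ dη, where the iterated integrals on the right are oriented integrals. -/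
/-!
Both oriented integrals can be moved inside the `y`-integral by Fubini: the kernels
`e^{-iζy}` and `∫₀^η e^{-iζy} dζ` are bounded by `1` and `|η|` uniformly in `y`, so their
products with `μ` are integrable on `[a, b] × (0, ∞)`. What remains is, for each `y > 0`, the
elementary double integral `∫₀^ω ∫₀^η e^{-iζy} dζ dη = -(e^{-iωy} - 1 + iωy) / y²`.
-/

open MeasureTheory Complex Set Function

instance isFiniteMeasure_restrict_uIoc (a b : ℝ) : IsFiniteMeasure (volume.restrict (uIoc a b)) :=
  inferInstanceAs (IsFiniteMeasure (volume.restrict (Ioc (min a b) (max a b))))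

section Fubini

variable {α β : Type*} [MeasurableSpace α] [MeasurableSpace β] {ν : Measure β} [SFinite ν]

theorem MeasureTheory.Integrable.mul_prod_of_norm_le {𝕜 : Type*} [NormedRing 𝕜] {μ : Measure α}
    [IsFiniteMeasure μ] {f : β → 𝕜} (hf : Integrable f ν) {k : α → β → 𝕜}
    (hk : AEStronglyMeasurable (uncurry k) (μ.prod ν))
    {C : ℝ} (hC : ∀ᵐ x ∂μ, ∀ y, ‖k x y‖ ≤ C) :
    Integrable (uncurry fun x y => f y * k x y) (μ.prod ν) :=
  (hf.comp_snd μ).mul_bdd hk (Measure.quasiMeasurePreserving_fst.ae hC |>.mono fun _ h => h _)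

theorem MeasureTheory.Integrable.intervalIntegral_prod_left {E : Type*} [NormedAddCommGroup E]
    [NormedSpace ℝ E] {a b : ℝ} {F : ℝ → β → E}
    (hF : Integrable (uncurry F) ((volume.restrict (uIoc a b)).prod ν)) :
    Integrable (fun y => ∫ x in a..b, F x y) ν := by
  simp_rw [intervalIntegral.intervalIntegral_eq_integral_uIoc]
  exact hF.integral_prod_right.smul (if a ≤ b then (1:ℝ) else -1)

end Fubini

theorem continuous_intervalIntegral_cexp_neg_I_mul :
    Continuous (uncurry fun η y : ℝ => ∫ ζ in (0:ℝ)..η, cexp (-I * ζ * y)) :=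
  intervalIntegral.continuous_parametric_intervalIntegral_of_continuous
    (f := fun p : ℝ × ℝ => fun ζ : ℝ => cexp (-I * ζ * p.2)) (by fun_prop) continuous_fst

theorem norm_intervalIntegral_cexp_neg_I_mul_le (η y : ℝ) :
    ‖∫ ζ in (0:ℝ)..η, cexp (-I * ζ * y)‖ ≤ |η| := by
  simpa using intervalIntegral.norm_integral_le_of_norm_le_const (a := 0) (b := η) (C := 1)
    (f := fun ζ : ℝ => cexp (-I * ζ * y)) fun ζ _ => by simp [norm_exp]

theorem intervalIntegral_cexp_neg_I_mul {y : ℝ} (hy : y ≠ 0) (η : ℝ) :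
    ∫ ζ in (0:ℝ)..η, cexp (-I * ζ * y) = I / y * (cexp (-I * η * y) - 1) := by
  have hc : -I * y ≠ 0 := by simp [hy]
  simp_rw [show ∀ ζ : ℂ, -I * ζ * y = (-I * y) * ζ from fun ζ => by ring]
  rw [integral_exp_mul_complex hc, ofReal_zero, mul_zero, exp_zero]
  have hy' : (y : ℂ) ≠ 0 := ofReal_ne_zero.2 hy
  field_simp
  linear_combination -(cexp (-(I * y * η)) - 1) * I_sq

theorem intervalIntegral_intervalIntegral_cexp_neg_I_mul {y : ℝ} (hy : y ≠ 0) (ω : ℝ) :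
    ∫ η in (0:ℝ)..ω, ∫ ζ in (0:ℝ)..η, cexp (-I * ζ * y)
      = -((cexp (-I * ω * y) - 1 + I * ω * y) / (y : ℂ) ^ 2) := by
  simp_rw [intervalIntegral_cexp_neg_I_mul hy]
  rw [intervalIntegral.integral_const_mul, intervalIntegral.integral_sub
    (Continuous.intervalIntegrable (by fun_prop) _ _) intervalIntegrable_const,
    intervalIntegral_cexp_neg_I_mul hy, intervalIntegral.integral_const, sub_zero, real_smul,
    mul_one]
  have hy' : (y : ℂ) ≠ 0 := ofReal_ne_zero.2 hy
  field_simp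
  linear_combination (cexp (-(I * y * ω)) - 1) * I_sq

theorem stmt2 (μ : ℝ → ℝ) (hμ : IntegrableOn μ (Set.Ioi 0)) (ω : ℝ) :
    IntegrableOn (fun y : ℝ =>
      ((Complex.exp (-Complex.I * ω * y) - 1 + Complex.I * ω * y) / (y:ℂ)^2) * (μ y : ℂ))
      (Set.Ioi 0) ∧
    ∫ y in Set.Ioi (0:ℝ),
        ((Complex.exp (-Complex.I * ω * y) - 1 + Complex.I * ω * y) / (y:ℂ)^2) * (μ y : ℂ)
      = -∫ η in (0:ℝ)..ω, ∫ ζ in (0:ℝ)..η,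
            ∫ y in Set.Ioi (0:ℝ), (μ y : ℂ) * Complex.exp (-Complex.I * ζ * y) := by
  have hμ' : Integrable (fun y => (μ y : ℂ)) (volume.restrict (Ioi 0)) := hμ.ofReal
  have inner (η : ℝ) : ∫ ζ in (0:ℝ)..η, ∫ y in Ioi (0:ℝ), (μ y : ℂ) * cexp (-I * ζ * y)
      = ∫ y in Ioi (0:ℝ), (μ y : ℂ) * ∫ ζ in (0:ℝ)..η, cexp (-I * ζ * y) := by
    rw [intervalIntegral_integral_swap (hμ'.mul_prod_of_norm_le
      (Continuous.aestronglyMeasurable (by fun_prop)) (C := 1)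
      (ae_of_all _ fun ζ y => by simp [norm_exp]))]
    simp_rw [intervalIntegral.integral_const_mul]
  have hswap : Integrable
      (uncurry fun η y => (μ y : ℂ) * ∫ ζ in (0:ℝ)..η, cexp (-I * ζ * y))
      ((volume.restrict (uIoc 0 ω)).prod (volume.restrict (Ioi 0))) :=
    hμ'.mul_prod_of_norm_le continuous_intervalIntegral_cexp_neg_I_mul.aestronglyMeasurable
      (ae_restrict_of_forall_mem measurableSet_uIoc fun η hη y =>
        (norm_intervalIntegral_cexp_neg_I_mul_le η y).trans
          (by simpa using abs_sub_left_of_mem_uIcc (uIoc_subset_uIcc hη)))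
  have outer (y : ℝ) (hy : y ∈ Ioi 0) :
      ∫ η in (0:ℝ)..ω, (μ y : ℂ) * ∫ ζ in (0:ℝ)..η, cexp (-I * ζ * y)
        = -(((cexp (-I * ω * y) - 1 + I * ω * y) / (y:ℂ)^2) * (μ y : ℂ)) := by
    rw [intervalIntegral.integral_const_mul,
      intervalIntegral_intervalIntegral_cexp_neg_I_mul (ne_of_gt hy)]
    ring
  refine ⟨IntegrableOn.congr_fun hswap.intervalIntegral_prod_left.neg
    (fun y hy => by rw [Pi.neg_apply, outer y hy, neg_neg]) measurableSet_Ioi, ?_⟩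
  simp_rw [inner]
  rw [intervalIntegral_integral_swap hswap, ← integral_neg]
  exact setIntegral_congr_fun measurableSet_Ioi fun y hy => by rw [outer y hy, neg_neg]
end

section
/- Let μ : (0,∞) → ℝ be Lebesgue integrable. Then for every ω ∈ ℝ, the function y ↦ (2(cos(ωy) − 1)/y²)·μ(y) is integrable on (0,∞) and [𝒢₂μ](ω) := ∫₀^∞ (2(cos(ωy) − 1)/y²) μ(y) dy = −2·Re ∫₀^ω ∫₀^η μ̂(ζ) dζ dη, where the iterated integrals on the right are oriented integrals. -/
/-!
For `y ≠ 0` put `K₁ ζ y = (1 - e^{-iζy}) / (iy)` and `K₂ ω y = (1 - iωy - e^{-iωy}) / y²`.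
Then `∂_ζ K₁ = e^{-iζy}`, `∂_ω K₂ = K₁`, both vanish at `0`, and `|K₁ ζ y| ≤ |ζ|`.
Differentiating `∫ μ K₁` and `∫ μ K₂` under the integral sign (dominated by `|ζ| |μ|`) shows
that the iterated oriented integral of `μ̂` is `∫₀^∞ μ(y) K₂ ω y dy`, and
`Re K₂ ω y = (1 - cos ωy) / y²`.
-/
open MeasureTheory Filter Complex

section ParametricIntegral

variable {α E : Type*} [MeasurableSpace α] {ν : Measure α} [NormedAddCommGroup E]
    [NormedSpace ℝ E] {F F' : ℝ → α → E} {g : ℝ → α → ℝ}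

theorem integrable_param_of_hasDerivAt {c : ℝ} (hF_meas : ∀ x, AEStronglyMeasurable (F x) ν)
    (hF_int : Integrable (F c) ν) (hg : ∀ r, Integrable (g r) ν)
    (h_bound : ∀ r, ∀ᵐ y ∂ν, ∀ x, |x| ≤ r → ‖F' x y‖ ≤ g r y)
    (h_deriv : ∀ᵐ y ∂ν, ∀ x, HasDerivAt (F · y) (F' x y) x) (x : ℝ) :
    Integrable (F x) ν := by
  set r := max |c| |x|
  refine (hF_int.norm.add ((hg r).mul_const ‖x - c‖)).mono' (hF_meas x) ?_
  filter_upwards [h_bound r, h_deriv] with y hy_bound hy_deriv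
  have hmvt : ‖F x y - F c y‖ ≤ g r y * ‖x - c‖ :=
    (convex_Icc (-r) r).norm_image_sub_le_of_norm_hasDerivWithin_le
      (fun t _ => (hy_deriv t).hasDerivWithinAt) (fun t ht => hy_bound t (abs_le.2 ht))
      (abs_le.1 (le_max_left _ _)) (abs_le.1 (le_max_right _ _))
  have := norm_le_norm_add_norm_sub' (F x y) (F c y)
  simp only [Pi.add_apply]
  linarith

theorem continuous_integral_of_locally_dominated (hF_meas : ∀ x, AEStronglyMeasurable (F x) ν)
    (hg : ∀ r, Integrable (g r) ν) (h_bound : ∀ r, ∀ᵐ y ∂ν, ∀ x, |x| ≤ r → ‖F x y‖ ≤ g r y)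
    (h_cont : ∀ᵐ y ∂ν, Continuous (F · y)) :
    Continuous (fun x => ∫ y, F x y ∂ν) := by
  refine continuous_iff_continuousAt.2 fun x₀ => continuousAt_of_dominated
    (Eventually.of_forall hF_meas) ?_ (hg (|x₀| + 1)) (h_cont.mono fun y hy => hy.continuousAt)
  filter_upwards [Metric.ball_mem_nhds x₀ one_pos] with x hx
  filter_upwards [h_bound (|x₀| + 1)] with y hy
  exact hy x (by simpa using (norm_lt_of_mem_ball hx).le)

theorem hasDerivAt_integral_of_locally_dominated {c : ℝ}
    (hF_meas : ∀ x, AEStronglyMeasurable (F x) ν) (hF_int : Integrable (F c) ν)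
    (hF'_meas : ∀ x, AEStronglyMeasurable (F' x) ν) (hg : ∀ r, Integrable (g r) ν)
    (h_bound : ∀ r, ∀ᵐ y ∂ν, ∀ x, |x| ≤ r → ‖F' x y‖ ≤ g r y)
    (h_deriv : ∀ᵐ y ∂ν, ∀ x, HasDerivAt (F · y) (F' x y) x) (x₀ : ℝ) :
    HasDerivAt (fun x => ∫ y, F x y ∂ν) (∫ y, F' x₀ y ∂ν) x₀ := by
  refine (hasDerivAt_integral_of_dominated_loc_of_deriv_le (Metric.ball_mem_nhds x₀ one_pos)
    (Eventually.of_forall hF_meas)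
    (integrable_param_of_hasDerivAt hF_meas hF_int hg h_bound h_deriv x₀) (hF'_meas x₀) ?_
    (hg (|x₀| + 1)) ?_).2
  · filter_upwards [h_bound (|x₀| + 1)] with y hy x hx
    exact hy x (by simpa using (norm_lt_of_mem_ball hx).le)
  · filter_upwards [h_deriv] with y hy x _ using hy x

variable [CompleteSpace E]

theorem intervalIntegral_integral_eq_sub_of_hasDerivAt (a b : ℝ)
    (hF_meas : ∀ x, AEStronglyMeasurable (F x) ν) (hF_int : Integrable (F a) ν)
    (hF'_meas : ∀ x, AEStronglyMeasurable (F' x) ν) (hg : ∀ r, Integrable (g r) ν)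
    (h_bound : ∀ r, ∀ᵐ y ∂ν, ∀ x, |x| ≤ r → ‖F' x y‖ ≤ g r y)
    (h_deriv : ∀ᵐ y ∂ν, ∀ x, HasDerivAt (F · y) (F' x y) x)
    (h_cont : ∀ᵐ y ∂ν, Continuous (F' · y)) :
    ∫ x in a..b, ∫ y, F' x y ∂ν = ∫ y, F b y ∂ν - ∫ y, F a y ∂ν :=
  intervalIntegral.integral_eq_sub_of_hasDerivAt
    (fun x _ => hasDerivAt_integral_of_locally_dominated hF_meas hF_int hF'_meas hg h_bound
      h_deriv x)
    ((continuous_integral_of_locally_dominated hF'_meas hg h_bound h_cont).intervalIntegrable a b)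

end ParametricIntegral

section Kernels

noncomputable def kernel₁ (ζ y : ℝ) : ℂ := (1 - cexp (-I * ζ * y)) / (I * y)

noncomputable def kernel₂ (ω y : ℝ) : ℂ := (1 - I * ω * y - cexp (-I * ω * y)) / (y : ℂ) ^ 2

@[simp] lemma kernel₁_zero (y : ℝ) : kernel₁ 0 y = 0 := by simp [kernel₁]

@[simp] lemma kernel₂_zero (y : ℝ) : kernel₂ 0 y = 0 := by simp [kernel₂]

@[fun_prop] lemma measurable_kernel₁ (ζ : ℝ) : Measurable (kernel₁ ζ) := by
  unfold kernel₁; fun_prop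

@[fun_prop] lemma measurable_kernel₂ (ω : ℝ) : Measurable (kernel₂ ω) := by
  unfold kernel₂; fun_prop

lemma norm_cexp_neg_I_mul_mul (ζ y : ℝ) : ‖cexp (-I * ζ * y)‖ = 1 := by
  rw [show -I * ζ * y = I * ((-(ζ * y) : ℝ) : ℂ) by push_cast; ring, norm_exp_I_mul_ofReal]

lemma norm_kernel₁_le {y : ℝ} (hy : y ≠ 0) (ζ : ℝ) : ‖kernel₁ ζ y‖ ≤ |ζ| := by
  have hnum : ‖1 - cexp (-I * ζ * y)‖ ≤ |ζ| * |y| := by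
    rw [norm_sub_rev, show -I * ζ * y = I * ((-(ζ * y) : ℝ) : ℂ) by push_cast; ring]
    simpa [abs_mul] using Real.norm_exp_I_mul_ofReal_sub_one_le (x := -(ζ * y))
  rw [kernel₁, norm_div, norm_mul, norm_I, one_mul, norm_real, Real.norm_eq_abs,
    div_le_iff₀ (abs_pos.2 hy)]
  exact hnum

lemma hasDerivAt_cexp_neg_I_mul_mul (ζ y : ℝ) :
    HasDerivAt (fun s : ℝ => cexp (-I * s * y)) (cexp (-I * ζ * y) * (-I * y)) ζ := by
  have h : HasDerivAt (fun s : ℝ => -I * s * y) (-I * y) ζ := by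
    simpa using ((hasDerivAt_id (ζ : ℂ)).const_mul (-I)).mul_const (y : ℂ) |>.comp_ofReal
  exact h.cexp

lemma hasDerivAt_kernel₁ {y : ℝ} (hy : y ≠ 0) (ζ : ℝ) :
    HasDerivAt (kernel₁ · y) (cexp (-I * ζ * y)) ζ := by
  have hy' : (y : ℂ) ≠ 0 := ofReal_ne_zero.2 hy
  refine (((hasDerivAt_cexp_neg_I_mul_mul ζ y).const_sub 1).div_const (I * y)).congr_deriv ?_
  field_simp

lemma hasDerivAt_kernel₂ {y : ℝ} (hy : y ≠ 0) (ω : ℝ) :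
    HasDerivAt (kernel₂ · y) (kernel₁ ω y) ω := by
  have hy' : (y : ℂ) ≠ 0 := ofReal_ne_zero.2 hy
  have hlin : HasDerivAt (fun s : ℝ => 1 - I * s * y) (-(I * y)) ω := by
    simpa using
      ((hasDerivAt_id (ω : ℂ)).const_mul I |>.mul_const (y : ℂ) |>.comp_ofReal).const_sub 1
  refine ((hlin.sub (hasDerivAt_cexp_neg_I_mul_mul ω y)).div_const ((y : ℂ) ^ 2)).congr_deriv ?_
  rw [kernel₁, div_eq_div_iff (pow_ne_zero 2 hy') (mul_ne_zero I_ne_zero hy')]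
  linear_combination (-(1 - cexp (-I * ω * y)) * (y : ℂ) ^ 2) * I_sq

lemma re_kernel₂ (ω y : ℝ) : (kernel₂ ω y).re = (1 - Real.cos (ω * y)) / y ^ 2 := by
  rw [kernel₂, show (y : ℂ) ^ 2 = ((y ^ 2 : ℝ) : ℂ) by push_cast; ring, div_ofReal_re,
    show -I * ω * y = ((-(ω * y) : ℝ) : ℂ) * I by push_cast; ring]
  simp only [sub_re, one_re, exp_ofReal_mul_I_re, Real.cos_neg]
  simp

end Kernels

section Transform

variable {μ : ℝ → ℝ}

lemma aestronglyMeasurable_ofReal_mul (hμ : IntegrableOn μ (Set.Ioi 0)) {k : ℝ → ℂ}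
    (hk : Measurable k) :
    AEStronglyMeasurable (fun y => (μ y : ℂ) * k y) (volume.restrict (Set.Ioi 0)) :=
  (continuous_ofReal.comp_aestronglyMeasurable hμ.aestronglyMeasurable).mul
    hk.aestronglyMeasurable

lemma intervalIntegral_fourier_eq_integral_kernel₁ (hμ : IntegrableOn μ (Set.Ioi 0)) (η : ℝ) :
    ∫ ζ in (0 : ℝ)..η, ∫ y in Set.Ioi (0 : ℝ), (μ y : ℂ) * cexp (-I * ζ * y)
      = ∫ y in Set.Ioi (0 : ℝ), (μ y : ℂ) * kernel₁ η y := by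
  have := intervalIntegral_integral_eq_sub_of_hasDerivAt
    (F := fun x y => (μ y : ℂ) * kernel₁ x y) (g := fun _ y => ‖μ y‖) 0 η
    (fun x => aestronglyMeasurable_ofReal_mul hμ (measurable_kernel₁ x)) (by simp)
    (fun x => aestronglyMeasurable_ofReal_mul hμ (by fun_prop)) (fun _ => hμ.norm)
    (fun _ => ae_of_all _ fun _ x _ => by
      rw [norm_mul, norm_real, norm_cexp_neg_I_mul_mul, mul_one])
    (ae_restrict_of_forall_mem measurableSet_Ioi fun y hy x =>
      (hasDerivAt_kernel₁ hy.ne' x).const_mul _)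
    (ae_of_all _ fun y => by fun_prop)
  simpa using this

lemma ae_norm_ofReal_mul_kernel₁_le (r : ℝ) :
    ∀ᵐ y ∂volume.restrict (Set.Ioi 0), ∀ x, |x| ≤ r → ‖(μ y : ℂ) * kernel₁ x y‖ ≤ r * ‖μ y‖ :=
  ae_restrict_of_forall_mem measurableSet_Ioi fun y hy x hx => by
    rw [norm_mul, norm_real, mul_comm r]
    exact mul_le_mul_of_nonneg_left ((norm_kernel₁_le hy.ne' x).trans hx) (norm_nonneg _)

lemma ae_hasDerivAt_ofReal_mul_kernel₂ :
    ∀ᵐ y ∂volume.restrict (Set.Ioi 0),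
      ∀ x, HasDerivAt (fun ω => (μ y : ℂ) * kernel₂ ω y) ((μ y : ℂ) * kernel₁ x y) x :=
  ae_restrict_of_forall_mem measurableSet_Ioi fun _ hy x =>
    (hasDerivAt_kernel₂ hy.ne' x).const_mul _

lemma integrableOn_ofReal_mul_kernel₂ (hμ : IntegrableOn μ (Set.Ioi 0)) (ω : ℝ) :
    IntegrableOn (fun y => (μ y : ℂ) * kernel₂ ω y) (Set.Ioi 0) :=
  integrable_param_of_hasDerivAt (c := 0)
    (fun x => aestronglyMeasurable_ofReal_mul hμ (measurable_kernel₂ x)) (by simp)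
    (fun r => hμ.norm.const_mul r) ae_norm_ofReal_mul_kernel₁_le ae_hasDerivAt_ofReal_mul_kernel₂ ω

lemma intervalIntegral_integral_kernel₁_eq_integral_kernel₂ (hμ : IntegrableOn μ (Set.Ioi 0))
    (ω : ℝ) :
    ∫ η in (0 : ℝ)..ω, ∫ y in Set.Ioi (0 : ℝ), (μ y : ℂ) * kernel₁ η y
      = ∫ y in Set.Ioi (0 : ℝ), (μ y : ℂ) * kernel₂ ω y := by
  have := intervalIntegral_integral_eq_sub_of_hasDerivAt 0 ω
    (fun x => aestronglyMeasurable_ofReal_mul hμ (measurable_kernel₂ x)) (by simp)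
    (fun x => aestronglyMeasurable_ofReal_mul hμ (measurable_kernel₁ x))
    (fun r => hμ.norm.const_mul r) ae_norm_ofReal_mul_kernel₁_le ae_hasDerivAt_ofReal_mul_kernel₂
    (ae_restrict_of_forall_mem measurableSet_Ioi fun y hy => continuous_iff_continuousAt.2
      fun x => ((hasDerivAt_kernel₁ hy.ne' x).const_mul _).continuousAt)
  simpa using this

end Transform

theorem stmt3 (μ : ℝ → ℝ) (hμ : IntegrableOn μ (Set.Ioi 0)) (ω : ℝ) :
    IntegrableOn (fun y : ℝ => (2 * (Real.cos (ω * y) - 1) / y^2) * μ y) (Set.Ioi 0) ∧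
    ∫ y in Set.Ioi (0:ℝ), (2 * (Real.cos (ω * y) - 1) / y^2) * μ y
      = -2 * (∫ η in (0:ℝ)..ω, ∫ ζ in (0:ℝ)..η,
            ∫ y in Set.Ioi (0:ℝ), (μ y : ℂ) * Complex.exp (-Complex.I * ζ * y)).re := by
  have hK₂ := integrableOn_ofReal_mul_kernel₂ hμ ω
  have h_re : ∀ y ∈ Set.Ioi (0 : ℝ),
      2 * (Real.cos (ω * y) - 1) / y ^ 2 * μ y = -2 * ((μ y : ℂ) * kernel₂ ω y).re := by
    intro y hy
    rw [re_ofReal_mul, re_kernel₂]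
    field_simp
    ring
  have h_int : IntegrableOn (fun y => -2 * ((μ y : ℂ) * kernel₂ ω y).re) (Set.Ioi 0) :=
    hK₂.re.const_mul (-2)
  refine ⟨h_int.congr_fun (fun y hy => (h_re y hy).symm) measurableSet_Ioi, ?_⟩
  simp_rw [intervalIntegral_fourier_eq_integral_kernel₁ hμ,
    intervalIntegral_integral_kernel₁_eq_integral_kernel₂ hμ]
  rw [setIntegral_congr_fun measurableSet_Ioi h_re, integral_const_mul]
  exact congrArg _ (integral_re hK₂)
end

section
/- Let μ : (0,∞) → ℝ be Lebesgue integrable and let q : ℝ → ℂ be a Schwartz function. Define (E₁q)(x) = ∫₀^∞ ((q(x+y) + q(x−y) − 2q(x))/y) μ(y) dy. Then E₁q is integrable on ℝ and its Fourier transform satisfies, for every ω ∈ ℝ, ∫_ℝ (E₁q)(x) e^{−iωx} dx = (∫₀^∞ ((e^{iωy} + e^{−iωy} − 2)/y) μ(y) dy) · ∫_ℝ q(x) e^{−iωx} dx. -/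
/-!
Since `q(x + y) + q(x - y) - 2 q(x) = (q(x + y) - q(x)) + (q(x - y) - q(x))` and each difference
has `L¹` norm at most `y ‖q'‖₁` (fundamental theorem of calculus and Tonelli), the factor `1 / y`
is absorbed: the integrand of `E₁q` is integrable on `ℝ × (0, ∞)` with norm at most
`2 ‖q'‖₁ ‖μ‖₁`. Fubini then exchanges the two integrals, and translating by `±y` multiplies
the Fourier transform of `q` by `e^{±iωy}`.
-/

open MeasureTheory

section TranslationBounds

variable {E : Type*} [NormedAddCommGroup E] [NormedSpace ℝ E] [CompleteSpace E] {f f' : ℝ → E}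

theorem enorm_sub_comp_add_le_setLIntegral (hf : ∀ x, HasDerivAt f (f' x) x)
    (hf' : Continuous f') (x : ℝ) {y : ℝ} (hy : 0 ≤ y) :
    ‖f (x + y) - f x‖ₑ ≤ ∫⁻ t in Set.Ioc 0 y, ‖f' (x + t)‖ₑ := by
  have hftc : ∫ t in Set.Ioc 0 y, f' (x + t) = f (x + y) - f x := by
    rw [← intervalIntegral.integral_of_le hy, intervalIntegral.integral_comp_add_left, add_zero]
    exact intervalIntegral.integral_eq_sub_of_hasDerivAt (fun t _ => hf t)
      (hf'.intervalIntegrable _ _)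
  rw [← hftc]
  exact enorm_integral_le_lintegral_enorm _

theorem lintegral_enorm_sub_comp_add_le (hf : ∀ x, HasDerivAt f (f' x) x)
    (hf' : Continuous f') {y : ℝ} (hy : 0 ≤ y) :
    ∫⁻ x, ‖f (x + y) - f x‖ₑ ≤ ENNReal.ofReal y * ∫⁻ x, ‖f' x‖ₑ :=
  calc ∫⁻ x, ‖f (x + y) - f x‖ₑ
      ≤ ∫⁻ x, ∫⁻ t in Set.Ioc 0 y, ‖f' (x + t)‖ₑ :=
        lintegral_mono fun x => enorm_sub_comp_add_le_setLIntegral hf hf' x hy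
    _ = ∫⁻ t in Set.Ioc 0 y, ∫⁻ x, ‖f' (x + t)‖ₑ :=
        lintegral_lintegral_swap (by fun_prop)
    _ = ∫⁻ t in Set.Ioc 0 y, ∫⁻ x, ‖f' x‖ₑ := by
        simp only [lintegral_add_right_eq_self fun x => ‖f' x‖ₑ]
    _ = ENNReal.ofReal y * ∫⁻ x, ‖f' x‖ₑ := by
        rw [setLIntegral_const, Real.volume_Ioc, sub_zero, mul_comm]

theorem lintegral_enorm_sub_comp_sub_le (hf : ∀ x, HasDerivAt f (f' x) x)
    (hf' : Continuous f') {y : ℝ} (hy : 0 ≤ y) :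
    ∫⁻ x, ‖f (x - y) - f x‖ₑ ≤ ENNReal.ofReal y * ∫⁻ x, ‖f' x‖ₑ :=
  calc ∫⁻ x, ‖f (x - y) - f x‖ₑ = ∫⁻ x, ‖f (x + y) - f x‖ₑ := by
        rw [← lintegral_add_right_eq_self _ y]
        simp only [add_sub_cancel_right]
        exact lintegral_congr fun x => enorm_sub_rev _ _
    _ ≤ ENNReal.ofReal y * ∫⁻ x, ‖f' x‖ₑ := lintegral_enorm_sub_comp_add_le hf hf' hy

theorem lintegral_enorm_secondDiff_le (hf : ∀ x, HasDerivAt f (f' x) x)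
    (hf' : Continuous f') {y : ℝ} (hy : 0 ≤ y) :
    ∫⁻ x, ‖f (x + y) + f (x - y) - 2 • f x‖ₑ ≤ 2 * ENNReal.ofReal y * ∫⁻ x, ‖f' x‖ₑ := by
  have hcont : Continuous f := continuous_iff_continuousAt.2 fun x => (hf x).continuousAt
  calc ∫⁻ x, ‖f (x + y) + f (x - y) - 2 • f x‖ₑ
      ≤ ∫⁻ x, ‖f (x + y) - f x‖ₑ + ‖f (x - y) - f x‖ₑ := by
        refine lintegral_mono fun x => ?_
        rw [two_nsmul, add_sub_add_comm]
        exact enorm_add_le _ _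
    _ = (∫⁻ x, ‖f (x + y) - f x‖ₑ) + ∫⁻ x, ‖f (x - y) - f x‖ₑ :=
        lintegral_add_left' ((hcont.comp (continuous_add_const y)).sub hcont).enorm.aemeasurable _
    _ ≤ 2 * ENNReal.ofReal y * ∫⁻ x, ‖f' x‖ₑ := by
        rw [two_mul, add_mul]
        exact add_le_add (lintegral_enorm_sub_comp_add_le hf hf' hy)
          (lintegral_enorm_sub_comp_sub_le hf hf' hy)

end TranslationBounds

theorem lintegral_enorm_secondDiff_div_mul_le {f f' : ℝ → ℂ} (hf : ∀ x, HasDerivAt f (f' x) x)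
    (hf' : Continuous f') {y : ℝ} (hy : 0 < y) (c : ℝ) :
    ∫⁻ x, ‖(f (x + y) + f (x - y) - 2 * f x) / (y : ℂ) * (c : ℂ)‖ₑ
      ≤ 2 * (∫⁻ x, ‖f' x‖ₑ) * ‖c‖ₑ := by
  have hnorm : ∀ z : ℂ, ‖z / (y : ℂ) * (c : ℂ)‖ₑ = ENNReal.ofReal (‖c‖ / y) * ‖z‖ₑ := fun z => by
    rw [← ofReal_norm, ← ofReal_norm, ← ENNReal.ofReal_mul (by positivity),
      norm_mul, norm_div, Complex.norm_real, Complex.norm_real, Real.norm_of_nonneg hy.le]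
    ring_nf
  have hsecond := lintegral_enorm_secondDiff_le hf hf' hy.le
  simp only [nsmul_eq_mul, Nat.cast_ofNat] at hsecond
  calc ∫⁻ x, ‖(f (x + y) + f (x - y) - 2 * f x) / (y : ℂ) * (c : ℂ)‖ₑ
      = ENNReal.ofReal (‖c‖ / y) * ∫⁻ x, ‖f (x + y) + f (x - y) - 2 * f x‖ₑ := by
        simp only [hnorm]
        exact lintegral_const_mul' _ _ ENNReal.ofReal_ne_top
    _ ≤ ENNReal.ofReal (‖c‖ / y) * (2 * ENNReal.ofReal y * ∫⁻ x, ‖f' x‖ₑ) := by gcongr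
    _ = 2 * (∫⁻ x, ‖f' x‖ₑ) * (ENNReal.ofReal (‖c‖ / y) * ENNReal.ofReal y) := by ring
    _ = 2 * (∫⁻ x, ‖f' x‖ₑ) * ‖c‖ₑ := by
        rw [← ENNReal.ofReal_mul (by positivity), div_mul_cancel₀ _ hy.ne', ofReal_norm]

theorem integrable_secondDiff_div_mul {f f' : ℝ → ℂ} (hf : ∀ x, HasDerivAt f (f' x) x)
    (hf'c : Continuous f') (hf' : Integrable f') {μ : ℝ → ℝ} (hμ : IntegrableOn μ (Set.Ioi 0)) :
    Integrable
      (fun p : ℝ × ℝ => (f (p.1 + p.2) + f (p.1 - p.2) - 2 * f p.1) / (p.2 : ℂ) * (μ p.2 : ℂ))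
      (volume.prod (volume.restrict (Set.Ioi 0))) := by
  have hcont : Continuous f := continuous_iff_continuousAt.2 fun x => (hf x).continuousAt
  have hmeas : AEStronglyMeasurable (fun p : ℝ × ℝ =>
      (f (p.1 + p.2) + f (p.1 - p.2) - 2 * f p.1) / (p.2 : ℂ) * (μ p.2 : ℂ))
      (volume.prod (volume.restrict (Set.Ioi 0))) := by
    refine (AEMeasurable.mul ?_ ?_).aestronglyMeasurable
    · exact (by fun_prop : Measurable fun p : ℝ × ℝ =>
        (f (p.1 + p.2) + f (p.1 - p.2) - 2 * f p.1) / (p.2 : ℂ)).aemeasurable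
    · exact Complex.measurable_ofReal.comp_aemeasurable hμ.aemeasurable.comp_snd
  refine ⟨hmeas, hasFiniteIntegral_iff_enorm.2 ?_⟩
  rw [lintegral_prod_symm _ hmeas.enorm]
  calc ∫⁻ y in Set.Ioi 0, ∫⁻ x, ‖(f (x + y) + f (x - y) - 2 * f x) / (y : ℂ) * (μ y : ℂ)‖ₑ
      ≤ ∫⁻ y in Set.Ioi 0, 2 * (∫⁻ x, ‖f' x‖ₑ) * ‖μ y‖ₑ := by
        refine setLIntegral_mono' measurableSet_Ioi fun y hy => ?_
        exact lintegral_enorm_secondDiff_div_mul_le hf hf'c hy (μ y)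
    _ = 2 * (∫⁻ x, ‖f' x‖ₑ) * ∫⁻ y in Set.Ioi 0, ‖μ y‖ₑ := 
        lintegral_const_mul' _ _ (ENNReal.mul_ne_top ENNReal.ofNat_ne_top hf'.hasFiniteIntegral.ne)
    _ < ⊤ := ENNReal.mul_lt_top (ENNReal.mul_lt_top ENNReal.ofNat_lt_top hf'.hasFiniteIntegral)
        hμ.hasFiniteIntegral

section FourierTranslation

open Complex

theorem norm_cexp_neg_I_mul (ω t : ℝ) : ‖exp (-I * ω * t)‖ = 1 := by
  simp [norm_exp]

theorem MeasureTheory.Integrable.mul_cexp_neg_I_mul {α : Type*} [MeasurableSpace α]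
    {ν : Measure α} {f : α → ℂ} (hf : Integrable f ν) {φ : α → ℝ} (hφ : Measurable φ) (ω : ℝ) :
    Integrable (fun a => f a * exp (-I * ω * φ a)) ν :=
  hf.mul_bdd (by fun_prop : Measurable fun a => exp (-I * ω * φ a)).aestronglyMeasurable
    (ae_of_all _ fun a => (norm_cexp_neg_I_mul ω (φ a)).le)

theorem integral_comp_add_right_mul_cexp (f : ℝ → ℂ) (ω y : ℝ) :
    ∫ x, f (x + y) * exp (-I * ω * x) = exp (I * ω * y) * ∫ x, f x * exp (-I * ω * x) := by
  rw [← integral_const_mul,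
    ← integral_add_right_eq_self (fun x => exp (I * ω * y) * (f x * exp (-I * ω * x))) y]
  congr 1 with x
  rw [mul_left_comm, ← exp_add]
  push_cast
  ring_nf

theorem integral_comp_sub_right_mul_cexp (f : ℝ → ℂ) (ω y : ℝ) :
    ∫ x, f (x - y) * exp (-I * ω * x) = exp (-I * ω * y) * ∫ x, f x * exp (-I * ω * x) := by
  simp only [sub_eq_add_neg, integral_comp_add_right_mul_cexp f ω (-y)]
  push_cast
  ring_nf

theorem integral_secondDiff_mul_cexp {f : ℝ → ℂ} (hf : Integrable f) (ω y : ℝ) :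
    ∫ x, (f (x + y) + f (x - y) - 2 * f x) * exp (-I * ω * x)
      = (exp (I * ω * y) + exp (-I * ω * y) - 2) * ∫ x, f x * exp (-I * ω * x) := by
  have hexp {g : ℝ → ℂ} (hg : Integrable g) : Integrable (fun x => g x * exp (-I * ω * x)) :=
    hg.mul_cexp_neg_I_mul (φ := fun x => x) measurable_id ω
  have h₁ := hexp (hf.comp_add_right y)
  have h₂ := hexp (hf.comp_sub_right y)
  calc ∫ x, (f (x + y) + f (x - y) - 2 * f x) * exp (-I * ω * x)
      = ∫ x, (f (x + y) * exp (-I * ω * x) + f (x - y) * exp (-I * ω * x)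
          - 2 * (f x * exp (-I * ω * x))) := by
        congr 1 with x
        ring
    _ = (∫ x, f (x + y) * exp (-I * ω * x)) + (∫ x, f (x - y) * exp (-I * ω * x))
          - 2 * ∫ x, f x * exp (-I * ω * x) := by
        -- `by exact` keeps the pattern of `integral_sub` a lambda, not the sum `F + G` of `h₁.add h₂`
        rw [integral_sub (by exact h₁.add h₂) ((hexp hf).const_mul 2), integral_add h₁ h₂,
          integral_const_mul]
    _ = (exp (I * ω * y) + exp (-I * ω * y) - 2) * ∫ x, f x * exp (-I * ω * x) := by
        rw [integral_comp_add_right_mul_cexp, integral_comp_sub_right_mul_cexp]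
        ring

end FourierTranslation

theorem stmt4 (μ : ℝ → ℝ) (hμ : IntegrableOn μ (Set.Ioi 0)) (q : SchwartzMap ℝ ℂ) :
    Integrable (fun x : ℝ =>
      ∫ y in Set.Ioi (0:ℝ), ((q (x + y) + q (x - y) - 2 * q x) / (y:ℂ)) * (μ y : ℂ)) ∧
    ∀ ω : ℝ,
      ∫ x : ℝ,
          (∫ y in Set.Ioi (0:ℝ), ((q (x + y) + q (x - y) - 2 * q x) / (y:ℂ)) * (μ y : ℂ)) *
            Complex.exp (-Complex.I * ω * x)
        = (∫ y in Set.Ioi (0:ℝ),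
              ((Complex.exp (Complex.I * ω * y) + Complex.exp (-Complex.I * ω * y) - 2) / (y:ℂ)) *
                (μ y : ℂ)) *
          ∫ x : ℝ, q x * Complex.exp (-Complex.I * ω * x) := by
  have hderiv (x : ℝ) : HasDerivAt q (SchwartzMap.derivCLM ℝ ℂ q x) x := by
    rw [SchwartzMap.derivCLM_apply]
    exact q.hasDerivAt x
  have hF := integrable_secondDiff_div_mul hderiv (SchwartzMap.derivCLM ℝ ℂ q).continuous
    (SchwartzMap.derivCLM ℝ ℂ q).integrable hμ
  refine ⟨hF.integral_prod_left, fun ω => ?_⟩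
  have hinner (y : ℝ) :
      ∫ x, (q (x + y) + q (x - y) - 2 * q x) / (y : ℂ) * (μ y : ℂ)
          * Complex.exp (-Complex.I * ω * x)
        = (Complex.exp (Complex.I * ω * y) + Complex.exp (-Complex.I * ω * y) - 2) / (y : ℂ)
            * (μ y : ℂ) * ∫ x, q x * Complex.exp (-Complex.I * ω * x) := by
    simp only [div_mul_eq_mul_div, mul_right_comm _ _ (Complex.exp _)]
    rw [integral_div, integral_mul_const, integral_secondDiff_mul_cexp q.integrable]
    ring
  simp only [← integral_mul_const]
  rw [integral_integral_swap (hF.mul_cexp_neg_I_mul measurable_fst ω)]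
  simp only [hinner]
end

section
/- Let α > 0 and β > 0, and define φ(t) = t / (1 − exp(−2t − α(1 − e^{−t}) − β(e^{t} − 1))) for t ≠ 0. Then: (i) φ(t) > 0 for every real t ≠ 0; (ii) φ(t) − t → 0 as t → +∞; (iii) φ(t) → 0 as t → −∞. -/
/-!
Write `φ t = t / (1 - exp (-g t))` with `g t = 2 t + α (1 - e^{-t}) + β (e^t - 1)`. Both correction
terms of `g` have the sign of `t`, so `g t` has the sign of `t` and `|g t| ≥ 2 |t|`. Positivity follows
at once. For `t > 0`, `φ t - t = t / (e^{g t} - 1)`, and for `t < 0`, `φ t = (-t) / (e^{-g t} - 1)`;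
in both cases the quotient is squeezed between `0` and `s / (e^s - 1)` with `s = |t| → ∞`.
-/

open Real Filter Topology

lemma tendsto_div_exp_sub_one_atTop : Tendsto (fun s : ℝ => s / (exp s - 1)) atTop (𝓝 0) := by
  have h := (tendsto_pow_mul_exp_neg_atTop_nhds_zero 1).div
    (tendsto_const_nhds.sub tendsto_exp_neg_atTop_nhds_zero) (by norm_num : (1 : ℝ) - 0 ≠ 0)
  rw [sub_zero, zero_div] at h
  refine h.congr fun s => ?_
  simp only [Pi.div_apply, pow_one, exp_neg]
  field_simp

lemma Filter.Tendsto.div_exp_sub_one_of_le {ι : Type*} {l : Filter ι} {s u : ι → ℝ}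
    (hs : Tendsto s l atTop) (hsu : ∀ᶠ x in l, s x ≤ u x) :
    Tendsto (fun x => s x / (Real.exp (u x) - 1)) l (𝓝 0) := by
  refine squeeze_zero' ?_ ?_ (tendsto_div_exp_sub_one_atTop.comp hs)
  · filter_upwards [hs.eventually_gt_atTop 0, hsu] with x hs hsu
    exact div_nonneg hs.le (sub_nonneg.2 (one_le_exp (hs.le.trans hsu)))
  · filter_upwards [hs.eventually_gt_atTop 0, hsu] with x hs hsu
    exact div_le_div_of_nonneg_left hs.le (sub_pos.2 (one_lt_exp_iff.2 hs))
      (sub_le_sub_right (exp_le_exp.2 hsu) 1)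

lemma div_one_sub_exp_neg_pos {t u : ℝ} (h : 0 < t * u) : 0 < t / (1 - exp (-u)) := by
  rcases mul_pos_iff.1 h with ⟨ht, hu⟩ | ⟨ht, hu⟩
  · exact div_pos ht (sub_pos.2 (exp_lt_one_iff.2 (neg_neg_of_pos hu)))
  · exact div_pos_of_neg_of_neg ht (sub_neg.2 (one_lt_exp_iff.2 (neg_pos.2 hu)))

lemma div_one_sub_exp_neg_sub_self (t : ℝ) {u : ℝ} (hu : u ≠ 0) :
    t / (1 - exp (-u)) - t = t / (exp u - 1) := by
  have : exp u - 1 ≠ 0 := sub_ne_zero.2 (by simpa using hu)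
  rw [exp_neg]
  field_simp
  ring

noncomputable def oouraExponent (α β t : ℝ) : ℝ := 2 * t + α * (1 - exp (-t)) + β * (exp t - 1)

section
variable {α β t : ℝ} (hα : 0 ≤ α) (hβ : 0 ≤ β)
include hα hβ

lemma two_mul_le_oouraExponent (ht : 0 ≤ t) : 2 * t ≤ oouraExponent α β t := by
  have h₁ : exp (-t) ≤ 1 := exp_le_one_iff.2 (neg_nonpos.2 ht)
  have h₂ : 1 ≤ exp t := one_le_exp ht
  unfold oouraExponent
  nlinarith

lemma oouraExponent_le_two_mul (ht : t ≤ 0) : oouraExponent α β t ≤ 2 * t := by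
  have h₁ : 1 ≤ exp (-t) := one_le_exp (neg_nonneg.2 ht)
  have h₂ : exp t ≤ 1 := exp_le_one_iff.2 ht
  unfold oouraExponent
  nlinarith

end

theorem stmt7 (α β : ℝ) (hα : 0 < α) (hβ : 0 < β)
    (φ : ℝ → ℝ)
    (hφ : ∀ t : ℝ, t ≠ 0 →
      φ t = t / (1 - Real.exp (-2*t - α*(1 - Real.exp (-t)) - β*(Real.exp t - 1)))) :
    (∀ t : ℝ, t ≠ 0 → 0 < φ t) ∧
    Filter.Tendsto (fun t : ℝ => φ t - t) Filter.atTop (nhds 0) ∧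
    Filter.Tendsto φ Filter.atBot (nhds 0) := by
  set g := oouraExponent α β
  have hφg : ∀ t, t ≠ 0 → φ t = t / (1 - exp (-g t)) := fun t ht => by
    rw [hφ t ht]; simp only [g, oouraExponent]; ring_nf
  have hg_pos : ∀ t, 0 < t → t ≤ g t := fun t ht => by
    linarith [two_mul_le_oouraExponent hα.le hβ.le ht.le]
  have hg_neg : ∀ t, t < 0 → g t ≤ t := fun t ht => by
    linarith [oouraExponent_le_two_mul hα.le hβ.le ht.le]
  refine ⟨fun t ht => ?_, ?_, ?_⟩
  · rw [hφg t ht]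
    rcases ht.lt_or_gt with ht | ht
    · exact div_one_sub_exp_neg_pos (mul_pos_of_neg_of_neg ht (by linarith [hg_neg t ht]))
    · exact div_one_sub_exp_neg_pos (mul_pos ht (by linarith [hg_pos t ht]))
  · refine (tendsto_id.div_exp_sub_one_of_le (u := g) ?_).congr' ?_
    · filter_upwards [eventually_gt_atTop 0] with t ht using hg_pos t ht
    · filter_upwards [eventually_gt_atTop 0] with t ht
      have := hg_pos t ht
      rw [hφg t ht.ne', div_one_sub_exp_neg_sub_self t (by linarith : 0 < g t).ne', id]
  · refine (tendsto_neg_atBot_atTop.div_exp_sub_one_of_le (u := fun t => -g t) ?_).congr' ?_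
    · filter_upwards [eventually_lt_atBot 0] with t ht using neg_le_neg (hg_neg t ht)
    · filter_upwards [eventually_lt_atBot 0] with t ht
      rw [hφg t ht.ne, ← neg_div_neg_eq t, neg_sub]
end

section
/- Let N' ≥ 1 and ℓ be integers with 2 ≤ ℓ ≤ N', and let f : ℤ → ℂ and G : ℤ → ℂ be arbitrary functions. Then Σ_{m=0}^{ℓ−1} Σ_{k=m−N'+1}^{m+N'} f(k)·(G(m+1−k) − G(m−k)) = Σ_{k=−N'+1}^{N'} f(ℓ−k)·G(k) − Σ_{k=−N'+1}^{N'} f(k)·G(−k) − G(−N')·Σ_{k=N'+1}^{N'+ℓ−1} f(k) + G(N')·Σ_{k=−N'+1}^{−N'+ℓ−1} f(k). -/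
/-!
With the truncated convolution `C m = ∑_{j=-N'+1}^{N'} f (m - j) * G j`, reindexing by
`j = m + 1 - k` and `j = m - k` shows that the inner sum at `m` is `C (m + 1) - C m` up to the two
boundary terms `- G (-N') * f (m + N') + G N' * f (m - N')`, because the two windows of `j`
differ by one index at each end. Summing over `m` telescopes to `C ℓ - C 0`, and `C 0` is the
second sum on the right up to the same kind of boundary terms.
-/

open Finset

section IntervalSums

variable {M : Type*} [AddCommMonoid M]

theorem Int.sum_Icc_eq_add_sum_Icc_add_one {a b : ℤ} (h : a ≤ b) (g : ℤ → M) :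
    ∑ k ∈ Icc a b, g k = g a + ∑ k ∈ Icc (a + 1) b, g k := by
  rw [← insert_Icc_add_one_left_eq_Icc h, sum_insert (by simp)]

theorem Int.sum_Icc_add_one_right {a b : ℤ} (h : a ≤ b + 1) (g : ℤ → M) :
    ∑ k ∈ Icc a (b + 1), g k = ∑ k ∈ Icc a b, g k + g (b + 1) := by
  rw [← insert_Icc_right_eq_Icc_add_one h, sum_insert (by simp), add_comm]

theorem Int.sum_Icc_add_right (a b c : ℤ) (g : ℤ → M) :
    ∑ k ∈ Icc a b, g (k + c) = ∑ k ∈ Icc (a + c) (b + c), g k := by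
  rw [← map_add_right_Icc, sum_map]
  rfl

theorem Int.sum_Ico_zero_add_right {L : ℤ} (hL : 1 ≤ L) (c : ℤ) (g : ℤ → M) :
    ∑ m ∈ Ico 0 L, g (m + c) = g c + ∑ k ∈ Icc (c + 1) (c + L - 1), g k := by
  rw [← Icc_sub_one_right_eq_Ico, Int.sum_Icc_add_right,
    Int.sum_Icc_eq_add_sum_Icc_add_one (by omega), zero_add, show L - 1 + c = c + L - 1 by ring]

theorem Int.sum_Icc_reflect (a b c : ℤ) (g : ℤ → M) :
    ∑ k ∈ Icc a b, g k = ∑ j ∈ Icc (c - b) (c - a), g (c - j) :=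
  sum_nbij' (c - ·) (c - ·) (by intro x; simp only [mem_Icc]; omega)
    (by intro x; simp only [mem_Icc]; omega)
    (by simp) (by simp) (by simp)

theorem Int.sum_Icc_add_right_eq_add_sum_Icc_add_one {a b : ℤ} (h : a ≤ b + 1) (g : ℤ → M) :
    ∑ k ∈ Icc a b, g k + g (b + 1) = g a + ∑ k ∈ Icc (a + 1) (b + 1), g k := by
  rw [← Int.sum_Icc_add_one_right h, Int.sum_Icc_eq_add_sum_Icc_add_one (by omega)]

end IntervalSums

theorem Int.sum_Ico_sub_telescope {M : Type*} [AddCommGroup M] (A : ℤ → M) {a b : ℤ}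
    (h : a ≤ b) : ∑ m ∈ Ico a b, (A (m + 1) - A m) = A b - A a := by
  induction b, h using Int.leInduction with
  | base => simp
  | succ b hab ih =>
    rw [← insert_Ico_right_eq_Ico_add_one hab, sum_insert right_notMem_Ico, ih]
    abel

section WindowedConv

variable {R : Type*} [CommRing R] (N : ℤ) (f G : ℤ → R)

noncomputable def windowedConv (m : ℤ) : R := ∑ j ∈ Icc (-N + 1) N, f (m - j) * G j

theorem sum_Icc_mul_add_one_sub_eq_windowedConv (m : ℤ) :
    ∑ k ∈ Icc (m - N + 1) (m + N), f k * G (m + 1 - k) = windowedConv N f G (m + 1) := by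
  rw [Int.sum_Icc_reflect _ _ (m + 1)]
  exact sum_congr (by congr 1 <;> ring) fun j _ ↦ by rw [sub_sub_cancel]

theorem sum_Icc_mul_sub_eq_windowedConv {N : ℤ} (hN : 0 ≤ N) (m : ℤ) :
    ∑ k ∈ Icc (m - N + 1) (m + N), f k * G (m - k)
      = windowedConv N f G m + G (-N) * f (m + N) - G N * f (m - N) := by
  have hreflect : ∑ k ∈ Icc (m - N + 1) (m + N), f k * G (m - k)
      = ∑ j ∈ Icc (-N) (N - 1), f (m - j) * G j := by
    rw [Int.sum_Icc_reflect _ _ m]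
    exact sum_congr (by congr 1 <;> ring) fun j _ ↦ by rw [sub_sub_cancel]
  have hshift := Int.sum_Icc_add_right_eq_add_sum_Icc_add_one (a := -N) (b := N - 1)
    (by omega) fun j ↦ f (m - j) * G j
  rw [sub_add_cancel, sub_neg_eq_add] at hshift
  rw [hreflect, windowedConv]
  linear_combination hshift

theorem sum_Icc_mul_sub_sub_eq {N : ℤ} (hN : 0 ≤ N) (m : ℤ) :
    ∑ k ∈ Icc (m - N + 1) (m + N), f k * (G (m + 1 - k) - G (m - k))
      = windowedConv N f G (m + 1) - windowedConv N f G m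
        - G (-N) * f (m + N) + G N * f (m - N) := by
  simp only [mul_sub, sum_sub_distrib, sum_Icc_mul_add_one_sub_eq_windowedConv,
    sum_Icc_mul_sub_eq_windowedConv f G hN]
  ring

end WindowedConv

theorem stmt10_general (N' ℓ : ℤ) (hN : 1 ≤ N') (hℓ : 2 ≤ ℓ) (f G : ℤ → ℂ) :
    ∑ m ∈ Finset.Icc (0:ℤ) (ℓ-1), ∑ k ∈ Finset.Icc (m-N'+1) (m+N'),
        f k * (G (m+1-k) - G (m-k))
      = (∑ k ∈ Finset.Icc (-N'+1) N', f (ℓ-k) * G k)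
        - (∑ k ∈ Finset.Icc (-N'+1) N', f k * G (-k))
        - G (-N') * (∑ k ∈ Finset.Icc (N'+1) (N'+ℓ-1), f k)
        + G N' * (∑ k ∈ Finset.Icc (-N'+1) (-N'+ℓ-1), f k) := by
  have hN₀ : 0 ≤ N' := by omega
  have hconv₀ := sum_Icc_mul_sub_eq_windowedConv f G hN₀ 0
  simp only [zero_sub, zero_add] at hconv₀
  calc _ = ∑ m ∈ Ico 0 ℓ, (windowedConv N' f G (m + 1) - windowedConv N' f G m
              - G (-N') * f (m + N') + G N' * f (m + -N')) := by
          rw [← Icc_sub_one_right_eq_Ico]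
          exact sum_congr rfl fun m _ ↦ by
            rw [sum_Icc_mul_sub_sub_eq f G hN₀, sub_eq_add_neg m N']
    _ = windowedConv N' f G ℓ - windowedConv N' f G 0
          - G (-N') * ∑ m ∈ Ico 0 ℓ, f (m + N') + G N' * ∑ m ∈ Ico 0 ℓ, f (m + -N') := by
          rw [← Int.sum_Ico_sub_telescope (windowedConv N' f G) (by omega), mul_sum, mul_sum,
            ← sum_sub_distrib, ← sum_add_distrib]
    _ = _ := by
          rw [Int.sum_Ico_zero_add_right (by omega), Int.sum_Ico_zero_add_right (by omega),
            windowedConv, hconv₀]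
          ring

theorem stmt10 (N' ℓ : ℤ) (hN : 1 ≤ N') (hℓ : 2 ≤ ℓ) (hℓN : ℓ ≤ N') (f G : ℤ → ℂ) :
    ∑ m ∈ Finset.Icc (0:ℤ) (ℓ-1), ∑ k ∈ Finset.Icc (m-N'+1) (m+N'),
        f k * (G (m+1-k) - G (m-k))
      = (∑ k ∈ Finset.Icc (-N'+1) N', f (ℓ-k) * G k)
        - (∑ k ∈ Finset.Icc (-N'+1) N', f k * G (-k))
        - G (-N') * (∑ k ∈ Finset.Icc (N'+1) (N'+ℓ-1), f k)
        + G N' * (∑ k ∈ Finset.Icc (-N'+1) (-N'+ℓ-1), f k) :=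
  stmt10_general N' ℓ hN hℓ f G
end

section
/- Let d > 0 and let f : ℂ → ℂ be analytic and bounded on the closed strip 𝒟_d = { z ∈ ℂ : |Im z| ≤ d }. For h̃ > 0, r > 0 and a positive integer N', define the truncated sinc-Gauss approximation 𝒯_{N',h̃,r}f(t) = Σ_{k=⌊t/h̃⌋−N'+1}^{⌊t/h̃⌋+N'} f(k h̃)·sinc(t/h̃ − k)·exp(−(t/h̃ − k)²/(2r²)) and the full series 𝒢_{h̃,r}f(t) = Σ_{k∈ℤ} f(k h̃)·sinc(t/h̃ − k)·exp(−(t/h̃ − k)²/(2r²)), where sinc(x) = sin(πx)/(πx) for x ≠ 0 and sinc(0) = 1. Then there exist a constant C' > 0 and an integer N₀, independent of N', h̃ and r, such that for every r > 0, every h̃ > 0 and every integer N' ≥ N₀, sup_{t∈ℝ} |𝒢_{h̃,r}f(t) − 𝒯_{N',h̃,r}f(t)| ≤ C' · (r² e^{3/(2r²)} / N'²) · exp(−N'²/(2r²)). -/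
/-!
Write `x = t / h` and `θ = x - ⌊x⌋`. The terms dropped by the truncation are those with
`x - k = ±(φ + N' + j)`, `j ∈ ℕ`, `φ ∈ {θ, 1 - θ}`. For them the sine only sees `φ`, so
`|sinc| ≤ φ / N'`, and the Gaussian factor is at most `e^{-N'²/(2r²)} e^{-aφ} (e^{-a})^j` with
`a = N' / r²`. Each tail is thus dominated by a geometric series, and `aφ e^{-aφ} ≤ 1 - e^{-a}`
bounds its sum by `(r² / N'²) e^{-N'²/(2r²)}`.
-/

noncomputable def sincg (x : ℝ) : ℝ :=
  if x = 0 then 1 else Real.sin (Real.pi * x) / (Real.pi * x)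

open Real Finset

section IntTails

variable {E : Type*} [NormedAddCommGroup E]

lemma hasSum_indicator_range {ι : Type*} {g : ι → E} {e : ℕ → ι}
    (he : Function.Injective e) {A : E} (h : HasSum (g ∘ e) A) :
    HasSum ((Set.range e).indicator g) A :=
  hasSum_subtype_iff_indicator.mp ((he.hasSum_range_iff (f := g)).mpr h)

lemma range_sub_natCast (a : ℤ) : Set.range (fun j : ℕ => a - j) = Set.Iic a := by
  ext k
  refine ⟨?_, fun hk => ⟨(a - k).toNat, ?_⟩⟩
  · rintro ⟨j, rfl⟩
    simp
  · simp only [Set.mem_Iic] at hk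
    show a - ((a - k).toNat : ℤ) = k
    omega

lemma range_add_natCast (a : ℤ) : Set.range (fun j : ℕ => a + j) = Set.Ici a := by
  ext k
  refine ⟨?_, fun hk => ⟨(k - a).toNat, ?_⟩⟩
  · rintro ⟨j, rfl⟩
    simp
  · simp only [Set.mem_Ici] at hk
    show a + ((k - a).toNat : ℤ) = k
    omega

lemma indicator_Iic_add_indicator_Icc_add_indicator_Ici {lo hi : ℤ} (h : lo ≤ hi + 1)
    (g : ℤ → E) :
    (Set.Iic (lo - 1)).indicator g + (Set.Icc lo hi).indicator g + (Set.Ici (hi + 1)).indicator g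
      = g := by
  ext k
  simp only [Pi.add_apply, Set.indicator_apply, Set.mem_Iic, Set.mem_Icc, Set.mem_Ici]
  split_ifs <;> first | omega | simp

variable [CompleteSpace E]

lemma norm_tsum_sub_sum_Icc_le {g : ℤ → E} {lo hi : ℤ} (h : lo ≤ hi + 1)
    (hL : Summable fun j : ℕ => ‖g (lo - 1 - j)‖)
    (hR : Summable fun j : ℕ => ‖g (hi + 1 + j)‖) :
    ‖∑' k, g k - ∑ k ∈ Icc lo hi, g k‖ ≤
      ∑' j : ℕ, ‖g (lo - 1 - j)‖ + ∑' j : ℕ, ‖g (hi + 1 + j)‖ := by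
  have hleft := hasSum_indicator_range (g := g) (fun i j hij => by simpa using hij)
    hL.of_norm.hasSum
  have hright := hasSum_indicator_range (g := g) (fun i j hij => by simpa using hij)
    hR.of_norm.hasSum
  rw [range_sub_natCast] at hleft
  rw [range_add_natCast] at hright
  have hmid := hasSum_subtype_iff_indicator.mp ((Icc lo hi).hasSum g)
  rw [coe_Icc] at hmid
  have hsum := (hleft.add hmid).add hright
  rw [← Pi.add_def, ← Pi.add_def, indicator_Iic_add_indicator_Icc_add_indicator_Ici h] at hsum
  rw [hsum.tsum_eq, add_right_comm, add_sub_cancel_right]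
  exact (norm_add_le _ _).trans
    (add_le_add (norm_tsum_le_tsum_norm hL) (norm_tsum_le_tsum_norm hR))

end IntTails

lemma sincg_neg (x : ℝ) : sincg (-x) = sincg x := by
  unfold sincg
  rcases eq_or_ne x 0 with rfl | hx
  · simp
  · rw [if_neg (neg_ne_zero.mpr hx), if_neg hx, mul_neg, sin_neg, neg_div_neg_eq]

lemma abs_sincg_add_natCast_le {θ : ℝ} (hθ : 0 ≤ θ) {n : ℕ} (hn : 0 < n) :
    |sincg (θ + n)| ≤ θ / n := by
  have hn' : (0 : ℝ) < n := Nat.cast_pos.mpr hn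
  have hsin : |sin (π * (θ + n))| ≤ π * θ := by
    rw [mul_add, mul_comm π (n : ℝ), sin_add_nat_mul_pi, abs_mul, abs_pow, abs_neg, abs_one,
      one_pow, one_mul]
    exact abs_sin_le_abs.trans (abs_of_nonneg (by positivity)).le
  have hpos : 0 < θ + n := by positivity
  rw [sincg, if_neg hpos.ne', abs_div, abs_of_pos (mul_pos pi_pos hpos),
    div_le_div_iff₀ (by positivity) hn']
  calc |sin (π * (θ + n))| * n ≤ π * θ * (θ + n) := by gcongr; linarith
    _ = θ * (π * (θ + n)) := by ring

noncomputable def sincGauss (r x : ℝ) : ℝ := sincg x * exp (-(x ^ 2 / (2 * r ^ 2)))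

lemma sincGauss_neg (r x : ℝ) : sincGauss r (-x) = sincGauss r x := by
  rw [sincGauss, sincGauss, sincg_neg, neg_sq]

lemma exp_neg_sq_add_le {r : ℝ} (hr : 0 < r) (θ : ℝ) (N j : ℕ) :
    exp (-((θ + (N + j)) ^ 2 / (2 * r ^ 2))) ≤
      exp (-(N ^ 2 / (2 * r ^ 2))) * exp (-(N / r ^ 2 * θ)) * exp (-(N / r ^ 2)) ^ j := by
  rw [← exp_nat_mul, ← exp_add, ← exp_add, exp_le_exp]
  have hsq : (N : ℝ) ^ 2 + 2 * N * θ + 2 * N * j ≤ (θ + (N + j)) ^ 2 := by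
    nlinarith [sq_nonneg (θ + j), (Nat.cast_nonneg j : (0 : ℝ) ≤ j)]
  calc -((θ + (N + j)) ^ 2 / (2 * r ^ 2))
      ≤ -(((N : ℝ) ^ 2 + 2 * N * θ + 2 * N * j) / (2 * r ^ 2)) := by gcongr
    _ = _ := by field_simp; ring

lemma abs_sincGauss_add_le {r θ : ℝ} (hr : 0 < r) (hθ : 0 ≤ θ) {N : ℕ} (hN : 0 < N)
    (j : ℕ) :
    |sincGauss r (θ + (N + j))| ≤
      θ / N * exp (-(N ^ 2 / (2 * r ^ 2))) * exp (-(N / r ^ 2 * θ)) * exp (-(N / r ^ 2)) ^ j := by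
  have hsinc : |sincg (θ + (N + j))| ≤ θ / N := by
    calc |sincg (θ + (N + j))| = |sincg (θ + ((N + j : ℕ) : ℝ))| := by push_cast; rfl
      _ ≤ θ / (N + j : ℕ) := abs_sincg_add_natCast_le hθ (by omega)
      _ ≤ θ / N := by gcongr; exact_mod_cast Nat.le_add_right N j
  rw [sincGauss, abs_mul, abs_of_pos (exp_pos _), mul_assoc, mul_assoc, ← mul_assoc (exp _)]
  exact mul_le_mul hsinc (exp_neg_sq_add_le hr θ N j) (exp_pos _).le (by positivity)

lemma mul_exp_neg_le_one_sub_exp_neg {u a : ℝ} (hua : u ≤ a) :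
    u * exp (-u) ≤ 1 - exp (-a) := by
  have hu : u * exp (-u) ≤ 1 - exp (-u) := by
    have := mul_le_mul_of_nonneg_right (add_one_le_exp u) (exp_pos (-u)).le
    rw [add_mul, ← exp_add, add_neg_cancel, exp_zero, one_mul] at this
    linarith
  linarith [exp_le_exp.mpr (neg_le_neg hua)]

lemma summable_abs_sincGauss_tail_and_tsum_le {r θ : ℝ} (hr : 0 < r) (hθ0 : 0 ≤ θ)
    (hθ1 : θ ≤ 1) {N : ℕ} (hN : 0 < N) :
    Summable (fun j : ℕ => |sincGauss r (θ + (N + j))|) ∧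
      ∑' j : ℕ, |sincGauss r (θ + (N + j))| ≤
        r ^ 2 / N ^ 2 * exp (-(N ^ 2 / (2 * r ^ 2))) := by
  set a : ℝ := N / r ^ 2 with ha
  have hN' : (0 : ℝ) < N := Nat.cast_pos.mpr hN
  have hapos : 0 < a := by positivity
  have hq1 : exp (-a) < 1 := exp_lt_one_iff.mpr (by linarith)
  have hgeom := (hasSum_geometric_of_lt_one (exp_pos (-a)).le hq1).mul_left
    (θ / N * exp (-(N ^ 2 / (2 * r ^ 2))) * exp (-(a * θ)))
  have hle := abs_sincGauss_add_le hr hθ0 hN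
  have hs := Summable.of_nonneg_of_le (fun _ => abs_nonneg _) hle hgeom.summable
  refine ⟨hs, (hs.tsum_le_tsum hle hgeom.summable).trans ?_⟩
  have hkey : a * θ * exp (-(a * θ)) ≤ 1 - exp (-a) :=
    mul_exp_neg_le_one_sub_exp_neg (by nlinarith)
  have h1q : 0 < 1 - exp (-a) := by linarith
  rw [hgeom.tsum_eq]
  calc θ / N * exp (-(N ^ 2 / (2 * r ^ 2))) * exp (-(a * θ)) * (1 - exp (-a))⁻¹
      = a * θ * exp (-(a * θ)) / (1 - exp (-a)) *
          (r ^ 2 / N ^ 2 * exp (-(N ^ 2 / (2 * r ^ 2)))) := by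
        rw [ha]; field_simp
    _ ≤ r ^ 2 / N ^ 2 * exp (-(N ^ 2 / (2 * r ^ 2))) := by
        apply mul_le_of_le_one_left (by positivity)
        rwa [div_le_one h1q]

lemma norm_tsum_sub_sum_window_le {E : Type*} [NormedAddCommGroup E] [CompleteSpace E]
    {u : ℤ → E} {B r x : ℝ} (hr : 0 < r) (hB : 0 ≤ B)
    (hu : ∀ k : ℤ, ‖u k‖ ≤ B * |sincGauss r (x - k)|) {N : ℕ} (hN : 0 < N) :
    ‖∑' k, u k - ∑ k ∈ Icc (⌊x⌋ - N + 1) (⌊x⌋ + N), u k‖ ≤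
      2 * B * (r ^ 2 / N ^ 2 * exp (-(N ^ 2 / (2 * r ^ 2)))) := by
  have hθ0 := Int.fract_nonneg x
  have hθ1 := Int.fract_lt_one x
  obtain ⟨hsL, hbL⟩ := summable_abs_sincGauss_tail_and_tsum_le hr hθ0 hθ1.le hN
  obtain ⟨hsR, hbR⟩ :=
    summable_abs_sincGauss_tail_and_tsum_le (θ := 1 - Int.fract x) hr (by linarith)
      (by linarith) hN
  have hL (j : ℕ) :
      ‖u (⌊x⌋ - N + 1 - 1 - j)‖ ≤ B * |sincGauss r (Int.fract x + (N + j))| := by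
    convert hu _ using 4
    rw [Int.fract]; push_cast; ring
  have hR (j : ℕ) :
      ‖u (⌊x⌋ + N + 1 + j)‖ ≤ B * |sincGauss r (1 - Int.fract x + (N + j))| := by
    rw [← sincGauss_neg]
    convert hu _ using 4
    rw [Int.fract]; push_cast; ring
  have hsL' := Summable.of_nonneg_of_le (fun _ => norm_nonneg _) hL (hsL.mul_left B)
  have hsR' := Summable.of_nonneg_of_le (fun _ => norm_nonneg _) hR (hsR.mul_left B)
  calc _ ≤ _ := norm_tsum_sub_sum_Icc_le (by omega) hsL' hsR'
    _ ≤ B * ∑' j : ℕ, |sincGauss r (Int.fract x + (N + j))| +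
          B * ∑' j : ℕ, |sincGauss r (1 - Int.fract x + (N + j))| := by
        rw [← tsum_mul_left, ← tsum_mul_left]
        exact add_le_add (hsL'.tsum_le_tsum hL (hsL.mul_left B))
          (hsR'.tsum_le_tsum hR (hsR.mul_left B))
    _ ≤ _ := by
        nlinarith [mul_le_mul_of_nonneg_left hbL hB, mul_le_mul_of_nonneg_left hbR hB]

theorem stmt15_general (d : ℝ) (hd : 0 < d) (f : ℂ → ℂ)
    (hb : ∃ B : ℝ, ∀ z ∈ {z : ℂ | |z.im| ≤ d}, ‖f z‖ ≤ B) :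
    ∃ C' > 0, ∃ N₀ : ℕ, ∀ r : ℝ, 0 < r → ∀ h : ℝ, 0 < h → ∀ N' : ℕ, N₀ ≤ N' → ∀ t : ℝ,
      ‖
          (∑' k : ℤ, f (((k : ℝ) * h : ℝ)) * (sincg (t / h - k) : ℝ) *
            (Real.exp (-((t / h - k)^2 / (2 * r^2))) : ℝ)) -
          ∑ k ∈ Finset.Icc (⌊t / h⌋ - (N' : ℤ) + 1) (⌊t / h⌋ + (N' : ℤ)),
            f (((k : ℝ) * h : ℝ)) * (sincg (t / h - k) : ℝ) *
              (Real.exp (-((t / h - k)^2 / (2 * r^2))) : ℝ)‖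
        ≤ C' * (r^2 * Real.exp (3 / (2 * r^2)) / (N' : ℝ)^2) *
            Real.exp (-((N' : ℝ)^2 / (2 * r^2))) := by
  obtain ⟨B, hB⟩ := hb
  have hfB (x : ℝ) : ‖f x‖ ≤ B := hB x (by simpa using hd.le)
  have hB0 : 0 ≤ B := (norm_nonneg _).trans (hfB 0)
  refine ⟨2 * B + 1, by positivity, 1, fun r hr h _ N hN t => ?_⟩
  have hterm (k : ℤ) : ‖f ((k : ℝ) * h : ℝ) * (sincg (t / h - k) : ℝ) *
      (exp (-((t / h - k) ^ 2 / (2 * r ^ 2))) : ℝ)‖ ≤ B * |sincGauss r (t / h - k)| := by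
    rw [norm_mul, norm_mul, Complex.norm_real, Complex.norm_real, norm_eq_abs, norm_eq_abs,
      mul_assoc, sincGauss, abs_mul]
    exact mul_le_mul_of_nonneg_right (hfB _) (by positivity)
  have hE : 1 ≤ exp (3 / (2 * r ^ 2)) := one_le_exp (by positivity)
  calc _ ≤ 2 * B * (r ^ 2 / N ^ 2 * exp (-(N ^ 2 / (2 * r ^ 2)))) :=
        norm_tsum_sub_sum_window_le hr hB0 hterm hN
    _ ≤ (2 * B + 1) * exp (3 / (2 * r ^ 2)) *
          (r ^ 2 / N ^ 2 * exp (-(N ^ 2 / (2 * r ^ 2)))) :=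
        mul_le_mul_of_nonneg_right (by nlinarith) (by positivity)
    _ = _ := by ring

theorem stmt15 (d : ℝ) (hd : 0 < d) (f : ℂ → ℂ)
    (hf : DifferentiableOn ℂ f {z : ℂ | |z.im| ≤ d})
    (hb : ∃ B : ℝ, ∀ z ∈ {z : ℂ | |z.im| ≤ d}, ‖f z‖ ≤ B) :
    ∃ C' > 0, ∃ N₀ : ℕ, ∀ r : ℝ, 0 < r → ∀ h : ℝ, 0 < h → ∀ N' : ℕ, N₀ ≤ N' → ∀ t : ℝ,
      ‖
          (∑' k : ℤ, f (((k : ℝ) * h : ℝ)) * (sincg (t / h - k) : ℝ) *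
            (Real.exp (-((t / h - k)^2 / (2 * r^2))) : ℝ)) -
          ∑ k ∈ Finset.Icc (⌊t / h⌋ - (N' : ℤ) + 1) (⌊t / h⌋ + (N' : ℤ)),
            f (((k : ℝ) * h : ℝ)) * (sincg (t / h - k) : ℝ) *
              (Real.exp (-((t / h - k)^2 / (2 * r^2))) : ℝ)‖
        ≤ C' * (r^2 * Real.exp (3 / (2 * r^2)) / (N' : ℝ)^2) *
            Real.exp (-((N' : ℝ)^2 / (2 * r^2))) :=
  stmt15_general d hd f hb
end

section
/- Let r > 0. Then for every ω ∈ ℝ, ∫_ℝ sinc(x)·exp(−x²/(2r²))·e^{−iωx} dx = (1/√π) ∫_{r(ω−π)/√2}^{r(ω+π)/√2} e^{−t²} dt, where sinc(x) = sin(πx)/(πx) for x ≠ 0 and sinc(0) = 1. Equivalently, the Fourier transform of the sinc-Gauss kernel equals (1/2)[erf(r(ω+π)/√2) − erf(r(ω−π)/√2)]. -/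
open MeasureTheory Complex Real

lemma sincg_eq_sinc (x : ℝ) : sincg x = sinc (π * x) := by
  simp [sincg, sinc, pi_ne_zero]

lemma integral_cexp_mul_mul_I_eq_sinc (a x : ℝ) :
    ∫ u in -a..a, cexp (x * u * I) = 2 * a * sinc (a * x) := by
  rcases eq_or_ne x 0 with rfl | hx
  · simp [two_mul]
  have hx' : (x : ℂ) ≠ 0 := by exact_mod_cast hx
  have := intervalIntegral.integral_comp_mul_left (a := -a) (b := a)
    (fun t : ℝ => cexp (t * I)) hx
  simp only [ofReal_mul] at this
  rw [this, mul_neg, integral_exp_mul_I_eq_sinc, mul_comm x a, real_smul]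
  push_cast
  field_simp

lemma integrable_uncurry_cexp_mul_mul_I_mul {μ : Measure ℝ} [IsFiniteMeasure μ] {g : ℝ → ℂ}
    (hg : Integrable g) :
    Integrable (Function.uncurry fun (u x : ℝ) => cexp (x * u * I) * g x) (μ.prod volume) := by
  refine (hg.comp_snd μ).bdd_mul (c := 1) (by fun_prop : Continuous _).aestronglyMeasurable
    (Filter.Eventually.of_forall fun p => ?_)
  rw [← ofReal_mul, norm_exp_ofReal_mul_I]

lemma integral_sincg_mul {g : ℝ → ℂ} (hg : Integrable g) :
    ∫ x, (sincg x : ℂ) * g x = (2 * π)⁻¹ * ∫ u in -π..π, ∫ x : ℝ, cexp (x * u * I) * g x := by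
  have hint : Integrable (Function.uncurry fun (u x : ℝ) => cexp (x * u * I) * g x)
      ((volume.restrict (Set.uIoc (-π) π)).prod volume) := by
    rw [Set.uIoc_of_le (by linarith [pi_pos])]
    exact integrable_uncurry_cexp_mul_mul_I_mul hg
  rw [intervalIntegral_integral_swap hint, ← integral_const_mul]
  congr 1 with x
  rw [intervalIntegral.integral_mul_const, integral_cexp_mul_mul_I_eq_sinc, sincg_eq_sinc]
  push_cast
  field_simp

lemma integral_cexp_mul_mul_I_mul_gaussian {σ : ℝ} (hσ : 0 < σ) (c : ℝ) :
    ∫ x : ℝ, cexp (c * x * I) * (rexp (-(x ^ 2 / (2 * σ ^ 2))) : ℂ)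
      = ((σ * √(2 * π) * rexp (-(σ ^ 2 * c ^ 2 / 2)) : ℝ) : ℂ) := by
  set b : ℝ := (2 * σ ^ 2)⁻¹
  have hb : 0 < b := by positivity
  have hsqrt : ((π / b : ℝ) : ℂ) ^ (1 / 2 : ℂ) = ((σ * √(2 * π) : ℝ) : ℂ) := by
    rw [show (1 / 2 : ℂ) = ((1 / 2 : ℝ) : ℂ) by norm_num, ← ofReal_cpow (by positivity),
      ← sqrt_eq_rpow, show π / b = σ ^ 2 * (2 * π) by simp only [b]; field_simp,
      sqrt_mul (by positivity), sqrt_sq hσ.le]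
  have h := fourierIntegral_gaussian (b := (b : ℂ)) (by simpa using hb) c
  convert h using 1
  · congr 1 with x
    rw [ofReal_exp, show (c : ℂ) * x * I = I * c * x by ring]
    push_cast [b]
    congr 2
    ring
  · rw [← ofReal_div, hsqrt, ofReal_mul, ofReal_exp]
    congr 2
    push_cast [b]
    field_simp
    ring

lemma integral_exp_neg_sq_mul_sub {r : ℝ} (hr : r ≠ 0) (ω a b : ℝ) :
    ∫ u in a..b, rexp (-(r ^ 2 * (u - ω) ^ 2 / 2))
      = √2 / r * ∫ t in r * (ω - b) / √2..r * (ω - a) / √2, rexp (-t ^ 2) := by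
  have hc : r / √2 ≠ 0 := by positivity
  have hexp (u : ℝ) : rexp (-(r ^ 2 * (u - ω) ^ 2 / 2)) = rexp (-(r / √2 * (ω - u)) ^ 2) := by
    rw [mul_pow, div_pow, sq_sqrt zero_le_two]
    congr 1
    ring
  simp_rw [hexp]
  rw [intervalIntegral.integral_comp_sub_left (fun v => rexp (-(r / √2 * v) ^ 2)),
    intervalIntegral.integral_comp_mul_left (fun t => rexp (-t ^ 2)) hc, smul_eq_mul, inv_div]
  simp only [div_mul_eq_mul_div]

theorem stmt17 (r : ℝ) (hr : 0 < r) (ω : ℝ) :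
    ∫ x : ℝ, ((sincg x * Real.exp (-(x^2 / (2 * r^2))) : ℝ) : ℂ) *
        Complex.exp (-Complex.I * ω * x)
      = (((1 / Real.sqrt Real.pi) *
          ∫ t in (r * (ω - Real.pi) / Real.sqrt 2)..(r * (ω + Real.pi) / Real.sqrt 2),
            Real.exp (-t^2) : ℝ) : ℂ) := by
  set g : ℝ → ℂ := fun x => (rexp (-(x ^ 2 / (2 * r ^ 2))) : ℂ) * cexp (-I * ω * x)
  have hg : Integrable g := by
    have h := (integrable_exp_neg_mul_sq (b := (2 * r ^ 2)⁻¹) (by positivity)).ofReal (𝕜 := ℂ)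
    simp only [neg_mul, inv_mul_eq_div] at h
    refine h.mul_bdd (c := 1) (by fun_prop) (Filter.Eventually.of_forall fun x => ?_)
    rw [show -I * ω * x = ((-(ω * x) : ℝ) : ℂ) * I by push_cast; ring, norm_exp_ofReal_mul_I]
  have hinner (u : ℝ) : ∫ x : ℝ, cexp (x * u * I) * g x
      = ((r * √(2 * π) * rexp (-(r ^ 2 * (u - ω) ^ 2 / 2)) : ℝ) : ℂ) := by
    rw [← integral_cexp_mul_mul_I_mul_gaussian hr]
    congr 1 with x
    simp only [g, ofReal_sub]
    rw [← mul_assoc, mul_right_comm, ← Complex.exp_add]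
    congr 2
    ring
  calc _ = ∫ x, (sincg x : ℂ) * g x := by
        simp only [g, ofReal_mul, mul_assoc]
    _ = (2 * π)⁻¹ * ∫ u in -π..π, ∫ x : ℝ, cexp (x * u * I) * g x := integral_sincg_mul hg
    _ = _ := by
      simp_rw [hinner, intervalIntegral.integral_ofReal, intervalIntegral.integral_const_mul,
        integral_exp_neg_sq_mul_sub hr.ne', sub_neg_eq_add]
      rw [← ofReal_mul]
      congr 1
      rw [sqrt_mul zero_le_two]
      field_simp
      rw [sq_sqrt zero_le_two, sq_sqrt pi_pos.le]
end
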